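/- arXiv:2310.18915 — 2 statements merged into one kernel-verified Lean document; each statement's English description precedes it below -/
import Mathlib

section
/- Under the assumptions: fᵢ twice continuously differentiable with γᵢIₙ ⪯ ∇²fᵢ ⪯ ΓᵢIₙ (0 < γᵢ, Γᵢ), Σᵢ ∇fᵢ(xᵢ) = 0, x* the global minimizer of Σᵢ fᵢ, G connected undirected with Laplacian L, and V_M = Σᵢ [fᵢ(x*) − fᵢ(xᵢ) − ∇fᵢ(xᵢ)ᵀ(x* − xᵢ)], it holds that V_M ≤ (Γ_max/λ₂(L)) · xᵀ(L ⊗ Iₙ)x, where Γ_max = maxᵢ Γᵢ and x is the stack of the xᵢ. -/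
open Matrix Kronecker RealInnerProductSpace

/-!
Write `Dᵢ(z) = fᵢ z - fᵢ xᵢ - ⟪∇fᵢ xᵢ, z - xᵢ⟫`. Since the gradients `∇fᵢ xᵢ` sum to zero,
`∑ᵢ Dᵢ` differs from `∑ᵢ fᵢ` by a constant, so it is minimised at `x*` and `V_M ≤ ∑ᵢ Dᵢ(x̄)` for
the average `x̄` of the `xᵢ`. The Hessian bound gives `Dᵢ(x̄) ≤ Γᵢ / 2 · ‖x̄ - xᵢ‖²`.
Coordinatewise, centring does not change the Laplacian quadratic form and makes the vector
orthogonal to `ker L`, which consists of constants because the graph is connected; on that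
orthogonal complement the quadratic form is at least `λ₂` times the squared norm.
-/

theorem le_add_deriv_add_of_deriv2_le {g g' g'' : ℝ → ℝ} {K : ℝ}
    (hg : ∀ t, HasDerivAt g (g' t) t) (hg' : ∀ t, HasDerivAt g' (g'' t) t)
    (hK : ∀ t, g'' t ≤ K) : g 1 ≤ g 0 + g' 0 + K / 2 := by
  -- the gap `K t² / 2 - g t` is convex, so it lies above its tangent line at `0`
  set h : ℝ → ℝ := fun t => K / 2 * t ^ 2 - g t
  have hh : ∀ t, HasDerivAt h (K * t - g' t) t := fun t =>
    (((hasDerivAt_pow 2 t).const_mul (K / 2)).sub (hg t)).congr_deriv (by push_cast; ring)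
  have hh' : ∀ t, HasDerivAt (fun t => K * t - g' t) (K - g'' t) t := fun t =>
    (((hasDerivAt_id' t).const_mul K).sub (hg' t)).congr_deriv (by ring)
  have hconv : ConvexOn ℝ Set.univ h := by
    exact convexOn_of_hasDerivWithinAt2_nonneg convex_univ
      (fun t _ => (hh t).continuousAt.continuousWithinAt) (fun t _ => (hh t).hasDerivWithinAt)
      (fun t _ => (hh' t).hasDerivWithinAt) fun t _ => sub_nonneg.2 (hK t)
  have := hconv.le_slope_of_hasDerivAt (Set.mem_univ 0) (Set.mem_univ 1) one_pos (hh 0)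
  simp only [slope_def_field, h] at this
  norm_num at this
  linarith

theorem ContDiff.le_add_fderiv_add_of_iteratedFDeriv_two_le {E : Type*}
    [NormedAddCommGroup E] [NormedSpace ℝ E] {f : E → ℝ} (hf : ContDiff ℝ 2 f) {C : ℝ}
    (hC : ∀ y v, iteratedFDeriv ℝ 2 f y ![v, v] ≤ C * ‖v‖ ^ 2) (a b : E) :
    f b ≤ f a + fderiv ℝ f a (b - a) + C / 2 * ‖b - a‖ ^ 2 := by
  set v := b - a
  have hline : ∀ t : ℝ, HasDerivAt (fun t : ℝ => a + t • v) v t := fun t => by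
    simpa using ((hasDerivAt_id t).smul_const v).const_add a
  have hd1 : Differentiable ℝ f := hf.differentiable two_ne_zero
  have hd2 : Differentiable ℝ (fderiv ℝ f) :=
    (hf.fderiv_right (m := 1) le_rfl).differentiable one_ne_zero
  have hg : ∀ t : ℝ, HasDerivAt (fun t => f (a + t • v)) (fderiv ℝ f (a + t • v) v) t :=
    fun t => (hd1 _).hasFDerivAt.comp_hasDerivAt t (hline t)
  have hg' : ∀ t : ℝ, HasDerivAt (fun t => fderiv ℝ f (a + t • v) v)
      (fderiv ℝ (fderiv ℝ f) (a + t • v) v v) t := fun t => by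
    simpa using ((hd2 _).hasFDerivAt.comp_hasDerivAt t (hline t)).clm_apply (hasDerivAt_const t v)
  have hK : ∀ t : ℝ, fderiv ℝ (fderiv ℝ f) (a + t • v) v v ≤ C * ‖v‖ ^ 2 := fun t => by
    simpa [iteratedFDeriv_two_apply] using hC (a + t • v) v
  have := le_add_deriv_add_of_deriv2_le hg hg' hK
  simp only [zero_smul, add_zero, one_smul, v, add_sub_cancel] at this
  linarith

section Bregman

variable {E : Type*} [NormedAddCommGroup E] [InnerProductSpace ℝ E] [CompleteSpace E]

noncomputable def bregmanDiv (f : E → ℝ) (x z : E) : ℝ := f z - f x - ⟪gradient f x, z - x⟫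

theorem sum_bregmanDiv_eq {ι : Type*} [Fintype ι] (f : ι → E → ℝ) (x : ι → E)
    (hgrad : ∑ i, gradient (f i) (x i) = 0) (z : E) :
    ∑ i, bregmanDiv (f i) (x i) z =
      ∑ i, f i z - ∑ i, (f i (x i) - ⟪gradient (f i) (x i), x i⟫) := by
  have hz : ∑ i, ⟪gradient (f i) (x i), z⟫ = 0 := by rw [← sum_inner, hgrad, inner_zero_left]
  simp only [bregmanDiv, inner_sub_right, Finset.sum_sub_distrib] at hz ⊢
  linarith

theorem bregmanDiv_le_of_iteratedFDeriv_two_le {f : E → ℝ} (hf : ContDiff ℝ 2 f) {C : ℝ}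
    (hC : ∀ y v, iteratedFDeriv ℝ 2 f y ![v, v] ≤ C * ‖v‖ ^ 2) (x z : E) :
    bregmanDiv f x z ≤ C / 2 * ‖z - x‖ ^ 2 := by
  have := hf.le_add_fderiv_add_of_iteratedFDeriv_two_le hC x z
  rw [bregmanDiv, inner_gradient_left]
  linarith

theorem sum_bregmanDiv_le_of_forall_sum_le {ι : Type*} [Fintype ι] {f : ι → E → ℝ} {x : ι → E}
    (hgrad : ∑ i, gradient (f i) (x i) = 0) {xstar : E} (hmin : ∀ y, ∑ i, f i xstar ≤ ∑ i, f i y)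
    (z : E) : ∑ i, bregmanDiv (f i) (x i) xstar ≤ ∑ i, bregmanDiv (f i) (x i) z := by
  rw [sum_bregmanDiv_eq f x hgrad, sum_bregmanDiv_eq f x hgrad]
  linarith [hmin z]

end Bregman

theorem SimpleGraph.Reachable.apply_eq_of_forall_adj {V β : Type*} {G : SimpleGraph V}
    {f : V → β} (hf : ∀ a b, G.Adj a b → f a = f b) {i j : V} (hij : G.Reachable i j) :
    f i = f j := by
  obtain ⟨w⟩ := hij
  induction w with
  | nil => rfl
  | cons hadj _ ih => exact (hf _ _ hadj).trans ih

theorem LinearMap.IsSymmetric.mul_norm_sq_le_inner_apply_self {E : Type*}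
    [NormedAddCommGroup E] [InnerProductSpace ℝ E] [FiniteDimensional ℝ E] {T : E →ₗ[ℝ] E}
    (hT : T.IsSymmetric) {c : ℝ} (hc : ∀ μ, μ ≠ 0 → Module.End.HasEigenvalue T μ → c ≤ μ)
    {y : E} (hy : ∀ w ∈ LinearMap.ker T, ⟪w, y⟫ = 0) : c * ‖y‖ ^ 2 ≤ ⟪T y, y⟫ := by
  set b := hT.eigenvectorBasis rfl
  set eig := hT.eigenvalues rfl
  have hquad : ⟪T y, y⟫ = ∑ i, eig i * b.repr y i ^ 2 := by
    have hdiag : ∀ i, b.repr (T y) i = eig i * b.repr y i :=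
      hT.eigenvectorBasis_apply_self_apply rfl y
    rw [← b.repr.inner_map_map, PiLp.inner_apply]
    simp only [hdiag, RCLike.inner_apply, conj_trivial]
    exact Finset.sum_congr rfl fun i _ => by ring
  have hnorm : ‖y‖ ^ 2 = ∑ i, b.repr y i ^ 2 := by
    rw [← b.repr.norm_map, EuclideanSpace.norm_sq_eq]
    simp
  rw [hquad, hnorm, Finset.mul_sum]
  refine Finset.sum_le_sum fun i _ => ?_
  by_cases hi : eig i = 0
  · have hker : b i ∈ LinearMap.ker T := by
      simp [b, eig, hi]
    simp [b.repr_apply_apply, hy _ hker]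
  · exact mul_le_mul_of_nonneg_right (hc _ hi (hT.hasEigenvalue_eigenvalues rfl i)) (sq_nonneg _)

namespace Matrix

theorem dotProduct_kronecker_one_mulVec {R ι κ : Type*} [CommSemiring R] [Fintype ι]
    [Fintype κ] [DecidableEq κ] (L : Matrix ι ι R) (v : ι × κ → R) :
    v ⬝ᵥ ((L ⊗ₖ (1 : Matrix κ κ R)) *ᵥ v) =
      ∑ k, (fun i => v (i, k)) ⬝ᵥ (L *ᵥ fun i => v (i, k)) := by
  simp only [dotProduct, mulVec, kroneckerMap_apply, one_apply, Fintype.sum_prod_type,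
    mul_ite, mul_one, mul_zero, ite_mul, zero_mul, Finset.sum_ite_eq, Finset.mem_univ, if_true]
  exact Finset.sum_comm

variable {ι : Type*} [Fintype ι] [DecidableEq ι] {A : Matrix ι ι ℝ}

def laplacian (A : Matrix ι ι ℝ) : Matrix ι ι ℝ := diagonal (fun i => ∑ j, A i j) - A

theorem IsSymm.laplacian_isHermitian (hA : A.IsSymm) : A.laplacian.IsHermitian :=
  (isHermitian_diagonal _).sub hA

theorem IsSymm.dotProduct_laplacian_mulVec (hA : A.IsSymm) (u : ι → ℝ) :
    u ⬝ᵥ (A.laplacian *ᵥ u) = (∑ i, ∑ j, A i j * (u i - u j) ^ 2) / 2 := by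
  have hswap : ∑ i, ∑ j, A i j * u j ^ 2 = ∑ i, ∑ j, A i j * u i ^ 2 := by
    rw [Finset.sum_comm]
    simp only [hA.apply]
  have hexpand : ∑ i, ∑ j, A i j * (u i - u j) ^ 2
      = ∑ i, ∑ j, A i j * u i ^ 2 - 2 * ∑ i, ∑ j, A i j * u i * u j
        + ∑ i, ∑ j, A i j * u j ^ 2 := by
    simp only [Finset.mul_sum, ← Finset.sum_sub_distrib, ← Finset.sum_add_distrib]
    exact Finset.sum_congr rfl fun i _ => Finset.sum_congr rfl fun j _ => by ring
  have hquad : u ⬝ᵥ (A.laplacian *ᵥ u)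
      = ∑ i, ∑ j, A i j * u i ^ 2 - ∑ i, ∑ j, A i j * u i * u j := by
    rw [laplacian, sub_mulVec, dotProduct_sub]
    simp only [dotProduct, mulVec_diagonal]
    simp only [mulVec, dotProduct, Finset.mul_sum, Finset.sum_mul]
    congr 1 <;> exact Finset.sum_congr rfl fun i _ => Finset.sum_congr rfl fun j _ => by ring
  rw [hquad, hexpand, hswap]
  ring

theorem IsSymm.eq_of_laplacian_mulVec_eq_zero (hA : A.IsSymm) (hnonneg : ∀ i j, 0 ≤ A i j)
    (hconn : (SimpleGraph.fromRel fun i j => A i j ≠ 0).Connected) {u : ι → ℝ}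
    (hu : A.laplacian *ᵥ u = 0) (i j : ι) : u i = u j := by
  have hterm_nonneg : ∀ i j, 0 ≤ A i j * (u i - u j) ^ 2 := fun i j =>
    mul_nonneg (hnonneg i j) (sq_nonneg _)
  have hsum : ∑ i, ∑ j, A i j * (u i - u j) ^ 2 = 0 := by
    have := hA.dotProduct_laplacian_mulVec u
    rw [hu, dotProduct_zero] at this
    linarith
  have hterm : ∀ i j, A i j * (u i - u j) ^ 2 = 0 := fun i j =>
    (Finset.sum_eq_zero_iff_of_nonneg fun j _ => hterm_nonneg i j).1
      ((Finset.sum_eq_zero_iff_of_nonneg fun i _ =>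
        Finset.sum_nonneg fun j _ => hterm_nonneg i j).1 hsum i (Finset.mem_univ i))
      j (Finset.mem_univ j)
  refine (hconn.preconnected i j).apply_eq_of_forall_adj fun a b hab => ?_
  obtain ⟨-, hab | hba⟩ := hab
  · simpa [hab, sub_eq_zero] using hterm a b
  · simpa [hba, sub_eq_zero, eq_comm] using hterm b a

theorem IsSymm.mul_sum_sq_sub_mean_le (hA : A.IsSymm) (hnonneg : ∀ i j, 0 ≤ A i j)
    (hconn : (SimpleGraph.fromRel fun i j => A i j ≠ 0).Connected) {c : ℝ}
    (hc : ∀ μ : ℝ, μ ≠ 0 → (∃ w : ι → ℝ, w ≠ 0 ∧ A.laplacian *ᵥ w = μ • w) → c ≤ μ)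
    (u : ι → ℝ) :
    c * ∑ i, (u i - (∑ j, u j) / Fintype.card ι) ^ 2 ≤ u ⬝ᵥ (A.laplacian *ᵥ u) := by
  rcases isEmpty_or_nonempty ι with hι | hι
  · simp
  set y : ι → ℝ := fun i => u i - (∑ j, u j) / Fintype.card ι
  have hshift : y ⬝ᵥ (A.laplacian *ᵥ y) = u ⬝ᵥ (A.laplacian *ᵥ u) := by
    simp only [hA.dotProduct_laplacian_mulVec, y, sub_sub_sub_cancel_right]
  have hy : ∑ i, y i = 0 := by
    have hcard : (Fintype.card ι : ℝ) ≠ 0 := by positivity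
    simp only [y, Finset.sum_sub_distrib, Finset.sum_const, Finset.card_univ, nsmul_eq_mul]
    field_simp
    ring
  have hT : (toEuclideanLin A.laplacian).IsSymmetric :=
    isSymmetric_toEuclideanLin_iff.2 hA.laplacian_isHermitian
  have hc' : ∀ μ, μ ≠ 0 → Module.End.HasEigenvalue (toEuclideanLin A.laplacian) μ → c ≤ μ := by
    intro μ hμ heig
    obtain ⟨v, hv⟩ := heig.exists_hasEigenvector
    refine hc μ hμ ⟨WithLp.ofLp v, by simpa using hv.2, ?_⟩
    simpa using congrArg WithLp.ofLp (Module.End.mem_eigenspace_iff.1 hv.1)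
  have hperp : ∀ w ∈ LinearMap.ker (toEuclideanLin A.laplacian), ⟪w, WithLp.toLp 2 y⟫ = 0 := by
    intro w hw
    have hconst : ∀ i, w i = w hι.some := fun i => hA.eq_of_laplacian_mulVec_eq_zero hnonneg
      hconn (by simpa using congrArg WithLp.ofLp hw) i hι.some
    simp [EuclideanSpace.inner_eq_star_dotProduct, dotProduct, hconst, ← Finset.sum_mul, hy]
  have := hT.mul_norm_sq_le_inner_apply_self hc' hperp
  rw [EuclideanSpace.real_norm_sq_eq] at this
  rw [← hshift]
  simpa [EuclideanSpace.inner_eq_star_dotProduct, dotProduct_comm] using this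

theorem IsSymm.mul_sum_norm_sub_average_sq_le (hA : A.IsSymm) (hnonneg : ∀ i j, 0 ≤ A i j)
    (hconn : (SimpleGraph.fromRel fun i j => A i j ≠ 0).Connected) {c : ℝ}
    (hc : ∀ μ : ℝ, μ ≠ 0 → (∃ w : ι → ℝ, w ≠ 0 ∧ A.laplacian *ᵥ w = μ • w) → c ≤ μ)
    {κ : Type*} [Fintype κ] [DecidableEq κ] (x : ι → EuclideanSpace ℝ κ) :
    c * ∑ i, ‖x i - (Fintype.card ι : ℝ)⁻¹ • ∑ j, x j‖ ^ 2 ≤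
      (fun p : ι × κ => x p.1 p.2) ⬝ᵥ
        ((A.laplacian ⊗ₖ (1 : Matrix κ κ ℝ)) *ᵥ fun p : ι × κ => x p.1 p.2) := by
  have hcoord : ∀ i, ‖x i - (Fintype.card ι : ℝ)⁻¹ • ∑ j, x j‖ ^ 2
      = ∑ k, (x i k - (∑ j, x j k) / Fintype.card ι) ^ 2 := fun i => by
    simp [EuclideanSpace.real_norm_sq_eq, div_eq_inv_mul]
  rw [dotProduct_kronecker_one_mulVec, Finset.sum_congr rfl fun i _ => hcoord i,
    Finset.sum_comm, Finset.mul_sum]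
  exact Finset.sum_le_sum fun k _ => hA.mul_sum_sq_sub_mean_le hnonneg hconn hc _

end Matrix

theorem VM_laplacian_bound_general (n N : ℕ)
    (f : Fin N → EuclideanSpace ℝ (Fin n) → ℝ)
    (Γ : Fin N → ℝ) (hΓ : ∀ i, 0 < Γ i)
    (hf : ∀ i, ContDiff ℝ 2 (f i))
    (hhessu : ∀ i, ∀ y v : EuclideanSpace ℝ (Fin n),
      iteratedFDeriv ℝ 2 (f i) y ![v, v] ≤ Γ i * ‖v‖ ^ 2)
    (x : Fin N → EuclideanSpace ℝ (Fin n))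
    (hzgs : ∑ i, gradient (f i) (x i) = 0)
    (xstar : EuclideanSpace ℝ (Fin n))
    (hmin : ∀ y, ∑ i, f i xstar ≤ ∑ i, f i y)
    (A : Matrix (Fin N) (Fin N) ℝ)
    (hsymm : ∀ i j, A i j = A j i) (hnonneg : ∀ i j, 0 ≤ A i j)
    (hconn : (SimpleGraph.fromRel (fun i j : Fin N => A i j ≠ 0)).Connected)
    (L : Matrix (Fin N) (Fin N) ℝ)
    (hL : L = Matrix.diagonal (fun i => ∑ j, A i j) - A)
    (lam2 : ℝ) (hlam2pos : 0 < lam2)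
    (hlam2min : ∀ μ : ℝ, μ ≠ 0 → (∃ w : Fin N → ℝ, w ≠ 0 ∧ L *ᵥ w = μ • w) → lam2 ≤ μ)
    (Γmax : ℝ) (hΓmax : IsGreatest (Set.range Γ) Γmax)
    (VM : ℝ)
    (hVM : VM = ∑ i, (f i xstar - f i (x i) - ⟪gradient (f i) (x i), xstar - x i⟫))
    (vec : Fin N × Fin n → ℝ) (hvec : ∀ p, vec p = x p.1 p.2) :
    VM ≤ (Γmax / lam2) * (vec ⬝ᵥ ((L ⊗ₖ (1 : Matrix (Fin n) (Fin n) ℝ)) *ᵥ vec)) := by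
  obtain ⟨i₀, hi₀⟩ := hΓmax.1
  have hΓmax_nonneg : 0 ≤ Γmax := hi₀ ▸ (hΓ i₀).le
  have hA : A.IsSymm := IsSymm.ext fun i j => hsymm j i
  obtain rfl : L = A.laplacian := hL
  obtain rfl : vec = fun p => x p.1 p.2 := funext hvec
  set xbar := (Fintype.card (Fin N) : ℝ)⁻¹ • ∑ j, x j
  set Q := (fun p : Fin N × Fin n => x p.1 p.2) ⬝ᵥ
    ((A.laplacian ⊗ₖ (1 : Matrix (Fin n) (Fin n) ℝ)) *ᵥ fun p => x p.1 p.2)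
  have hspread : lam2 * ∑ i, ‖x i - xbar‖ ^ 2 ≤ Q :=
    hA.mul_sum_norm_sub_average_sq_le hnonneg hconn hlam2min x
  have hQ : 0 ≤ Q := le_trans (by positivity) hspread
  calc VM ≤ ∑ i, bregmanDiv (f i) (x i) xbar :=
        hVM ▸ sum_bregmanDiv_le_of_forall_sum_le hzgs hmin xbar
    _ ≤ ∑ i, Γmax / 2 * ‖x i - xbar‖ ^ 2 := Finset.sum_le_sum fun i _ => by
        rw [norm_sub_rev]
        refine (bregmanDiv_le_of_iteratedFDeriv_two_le (hf i) (hhessu i) _ _).trans ?_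
        gcongr
        exact hΓmax.2 ⟨i, rfl⟩
    _ = Γmax / 2 * ∑ i, ‖x i - xbar‖ ^ 2 := Finset.mul_sum .. |>.symm
    _ ≤ Γmax / 2 * (Q / lam2) := by gcongr; rwa [le_div_iff₀ hlam2pos, mul_comm]
    _ = Γmax / lam2 * Q / 2 := by ring
    _ ≤ Γmax / lam2 * Q := half_le_self (by positivity)

theorem VM_laplacian_bound (n N : ℕ) (hN : 0 < N)
    (f : Fin N → EuclideanSpace ℝ (Fin n) → ℝ)
    (γ Γ : Fin N → ℝ) (hγ : ∀ i, 0 < γ i) (hΓ : ∀ i, 0 < Γ i)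
    (hf : ∀ i, ContDiff ℝ 2 (f i))
    (hhessl : ∀ i, ∀ y v : EuclideanSpace ℝ (Fin n),
      γ i * ‖v‖ ^ 2 ≤ iteratedFDeriv ℝ 2 (f i) y ![v, v])
    (hhessu : ∀ i, ∀ y v : EuclideanSpace ℝ (Fin n),
      iteratedFDeriv ℝ 2 (f i) y ![v, v] ≤ Γ i * ‖v‖ ^ 2)
    (x : Fin N → EuclideanSpace ℝ (Fin n))
    (hzgs : ∑ i, gradient (f i) (x i) = 0)
    (xstar : EuclideanSpace ℝ (Fin n))
    (hmin : ∀ y, ∑ i, f i xstar ≤ ∑ i, f i y)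
    (A : Matrix (Fin N) (Fin N) ℝ)
    (hsymm : ∀ i j, A i j = A j i) (hnonneg : ∀ i j, 0 ≤ A i j)
    (hconn : (SimpleGraph.fromRel (fun i j : Fin N => A i j ≠ 0)).Connected)
    (L : Matrix (Fin N) (Fin N) ℝ)
    (hL : L = Matrix.diagonal (fun i => ∑ j, A i j) - A)
    (lam2 : ℝ) (hlam2pos : 0 < lam2)
    (hlam2eig : ∃ v : Fin N → ℝ, v ≠ 0 ∧ L *ᵥ v = lam2 • v)
    (hlam2min : ∀ μ : ℝ, μ ≠ 0 → (∃ w : Fin N → ℝ, w ≠ 0 ∧ L *ᵥ w = μ • w) → lam2 ≤ μ)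
    (Γmax : ℝ) (hΓmax : IsGreatest (Set.range Γ) Γmax)
    (VM : ℝ)
    (hVM : VM = ∑ i, (f i xstar - f i (x i) - ⟪gradient (f i) (x i), xstar - x i⟫))
    (vec : Fin N × Fin n → ℝ) (hvec : ∀ p, vec p = x p.1 p.2) :
    VM ≤ (Γmax / lam2) * (vec ⬝ᵥ ((L ⊗ₖ (1 : Matrix (Fin n) (Fin n) ℝ)) *ᵥ vec)) :=
  VM_laplacian_bound_general n N f Γ hΓ hf hhessu x hzgs xstar hmin A hsymm hnonneg hconn L hL lam2
    hlam2pos hlam2min Γmax hΓmax VM hVM vec hvec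
end

section
/- Suppose V : [t0, t0+T) → ℝ is nonnegative and differentiable, ϱ(t) = T^h/(T+t0−t)^h with h, T > 0, and V̇(t) ≤ −κ₁ (ϱ'(t)/ϱ(t)) σ V(t) with κ₁, σ > 0. If additionally V(t) ≥ (γ/2)‖x(t) − x*‖² for some γ > 0 and continuous x : [t0, t0+T) → ℝⁿ, then x(t) → x* as t → (t0+T)⁻. -/
open Set Filter Topology

/-! Since `ϱ'/ϱ = h / (T + t₀ - t)`, the decay inequality says exactly that
`V t * (t₀ + T - t) ^ (-κ₁ h σ)` is nonincreasing. Hence `V t ≤ C (t₀ + T - t) ^ (κ₁ h σ)`,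
which tends to `0` at the prescribed time, and the strong-convexity lower bound squeezes
`‖x t - x*‖` to `0`. -/

theorem hasDerivAt_sub_rpow {b c t : ℝ} (ht : t < b) :
    HasDerivAt (fun s => (b - s) ^ c) (-(c * (b - t) ^ (c - 1))) t := by
  simpa using ((hasDerivAt_id t).const_sub b).rpow_const (p := c) (Or.inl (sub_pos.2 ht).ne')

section

variable {a b c : ℝ} {V V' : ℝ → ℝ}

theorem antitoneOn_mul_sub_rpow_neg
    (hV : ∀ t ∈ Ico a b, HasDerivWithinAt V (V' t) (Ico a b) t)
    (hV' : ∀ t ∈ Ico a b, V' t ≤ -(c / (b - t)) * V t) :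
    AntitoneOn (fun t => V t * (b - t) ^ (-c)) (Ico a b) := by
  have hpos : ∀ t ∈ Ico a b, 0 < b - t := fun t ht => sub_pos.2 ht.2
  refine antitoneOn_of_hasDerivWithinAt_nonpos (convex_Ico a b)
    (f' := fun t => V' t * (b - t) ^ (-c) + V t * -(-c * (b - t) ^ (-c - 1)))
    (fun t ht => (hV t ht).continuousWithinAt.mul
      ((continuousAt_const.sub continuousAt_id).rpow_const (Or.inl (hpos t ht).ne')).continuousWithinAt)
    (fun t ht => ?_) (fun t ht => ?_)
  · rw [interior_Ico] at ht ⊢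
    exact ((hV t (Ioo_subset_Ico_self ht)).mono Ioo_subset_Ico_self).mul
      (hasDerivAt_sub_rpow ht.2).hasDerivWithinAt
  · rw [interior_Ico] at ht
    have htIco := Ioo_subset_Ico_self ht
    have hbt := hpos t htIco
    have hrpow : 0 ≤ (b - t) ^ (-c) := Real.rpow_nonneg hbt.le _
    have key : V t * -(-c * (b - t) ^ (-c - 1)) = c / (b - t) * V t * (b - t) ^ (-c) := by
      rw [Real.rpow_sub_one hbt.ne']; ring
    rw [key]
    nlinarith [mul_le_mul_of_nonneg_right (hV' t htIco) hrpow]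

theorem le_mul_sub_rpow_of_hasDerivWithinAt (hab : a < b)
    (hV : ∀ t ∈ Ico a b, HasDerivWithinAt V (V' t) (Ico a b) t)
    (hV' : ∀ t ∈ Ico a b, V' t ≤ -(c / (b - t)) * V t) {t : ℝ} (ht : t ∈ Ico a b) :
    V t ≤ V a * (b - a) ^ (-c) * (b - t) ^ c := by
  have hbt : 0 < b - t := sub_pos.2 ht.2
  calc V t = V t * (b - t) ^ (-c) * (b - t) ^ c := by
        rw [mul_assoc, ← Real.rpow_add hbt, neg_add_cancel, Real.rpow_zero, mul_one]
    _ ≤ V a * (b - a) ^ (-c) * (b - t) ^ c :=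
        mul_le_mul_of_nonneg_right
          (antitoneOn_mul_sub_rpow_neg hV hV' (left_mem_Ico.2 hab) ht ht.1) (Real.rpow_nonneg hbt.le c)

end

theorem tendsto_sub_rpow_nhdsLT {b c : ℝ} (hc : 0 < c) :
    Tendsto (fun t => (b - t) ^ c) (𝓝[<] b) (𝓝 0) := by
  have : Tendsto (fun t => b - t) (𝓝 b) (𝓝 (b - b)) := tendsto_const_nhds.sub tendsto_id
  rw [sub_self] at this
  simpa [Real.zero_rpow hc.ne'] using (this.mono_left nhdsWithin_le_nhds).rpow_const (p := c) (Or.inr hc.le)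

theorem tendsto_of_mul_norm_sub_sq_le {α E : Type*} [SeminormedAddCommGroup E] {l : Filter α}
    {x : α → E} {x₀ : E} {B : α → ℝ} {γ : ℝ} (hγ : 0 < γ) (hB : Tendsto B l (𝓝 0))
    (hle : ∀ᶠ t in l, γ * ‖x t - x₀‖ ^ 2 ≤ B t) : Tendsto x l (𝓝 x₀) := by
  rw [tendsto_iff_norm_sub_tendsto_zero]
  refine squeeze_zero' (.of_forall fun t => norm_nonneg _) ?_ (by simpa using (hB.div_const γ).sqrt)
  filter_upwards [hle] with t ht
  rw [← Real.sqrt_sq (norm_nonneg (x t - x₀))]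
  exact Real.sqrt_le_sqrt ((le_div_iff₀' hγ).2 ht)

theorem prescribed_time_state_convergence_general (n : ℕ) (T h t0 κ₁ σ γ : ℝ)
    (hT : 0 < T) (hh : 0 < h) (hκ₁ : 0 < κ₁) (hσ : 0 < σ) (hγ : 0 < γ)
    (V V' : ℝ → ℝ)
    (hVderiv : ∀ t ∈ Ico t0 (t0 + T), HasDerivWithinAt V (V' t) (Ico t0 (t0 + T)) t)
    (hVineq : ∀ t ∈ Ico t0 (t0 + T), V' t ≤ -κ₁ * (h / (T + t0 - t)) * σ * V t)
    (x : ℝ → EuclideanSpace ℝ (Fin n))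
    (xstar : EuclideanSpace ℝ (Fin n))
    (hlower : ∀ t ∈ Ico t0 (t0 + T), (γ / 2) * ‖x t - xstar‖ ^ 2 ≤ V t) :
    Tendsto x (nhdsWithin (t0 + T) (Iio (t0 + T))) (nhds xstar) := by
  have hdecay : ∀ t ∈ Ico t0 (t0 + T), V' t ≤ -(κ₁ * h * σ / (t0 + T - t)) * V t :=
    fun t ht => (hVineq t ht).trans_eq (by ring)
  have hbound t (ht : t ∈ Ico t0 (t0 + T)) :=
    le_mul_sub_rpow_of_hasDerivWithinAt (lt_add_of_pos_right t0 hT) hVderiv hdecay ht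
  have hlimit := (tendsto_sub_rpow_nhdsLT (b := t0 + T) (c := κ₁ * h * σ) (by positivity)).const_mul
    (V t0 * (t0 + T - t0) ^ (-(κ₁ * h * σ)))
  rw [mul_zero] at hlimit
  refine tendsto_of_mul_norm_sub_sq_le (half_pos hγ) hlimit ?_
  filter_upwards [Ico_mem_nhdsLT (lt_add_of_pos_right t0 hT)] with t ht
  exact (hlower t ht).trans (hbound t ht)

theorem prescribed_time_state_convergence (n : ℕ) (T h t0 κ₁ σ γ : ℝ)
    (hT : 0 < T) (hh : 0 < h) (hκ₁ : 0 < κ₁) (hσ : 0 < σ) (hγ : 0 < γ)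
    (ϱ : ℝ → ℝ) (hϱ : ∀ t ∈ Ico t0 (t0 + T), ϱ t = T ^ h / (T + t0 - t) ^ h)
    (V V' : ℝ → ℝ) (hVnonneg : ∀ t ∈ Ico t0 (t0 + T), 0 ≤ V t)
    (hVderiv : ∀ t ∈ Ico t0 (t0 + T), HasDerivWithinAt V (V' t) (Ico t0 (t0 + T)) t)
    (hVineq : ∀ t ∈ Ico t0 (t0 + T), V' t ≤ -κ₁ * (h / (T + t0 - t)) * σ * V t)
    (x : ℝ → EuclideanSpace ℝ (Fin n)) (hx : ContinuousOn x (Ico t0 (t0 + T)))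
    (xstar : EuclideanSpace ℝ (Fin n))
    (hlower : ∀ t ∈ Ico t0 (t0 + T), (γ / 2) * ‖x t - xstar‖ ^ 2 ≤ V t) :
    Tendsto x (nhdsWithin (t0 + T) (Iio (t0 + T))) (nhds xstar) :=
  prescribed_time_state_convergence_general n T h t0 κ₁ σ γ hT hh hκ₁ hσ hγ V V' hVderiv hVineq x
    xstar hlower
end
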